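/- Let u and v be nonempty finite words over a totally ordered alphabet such that u^ω < v^ω in the lexicographic order on infinite words, and suppose neither u is a prefix of v nor v is a prefix of u. Then for all finite words x and y, (ux)^ω < (vy)^ω. -/
import Mathlib


variable {A : Type*} [LinearOrder A] [Inhabited A]

/-- The infinite periodic word `u^ω = uuu⋯`, as a function `ℕ → A`. -/
def omegaPow (u : List A) : ℕ → A := fun n => u.getD (n % u.length) default

/-- Lexicographic order on infinite words: `s < t` iff at the first position where
they differ, `s` has the smaller letter. -/
def lexLt (s t : ℕ → A) : Prop := ∃ k, (∀ i < k, s i = t i) ∧ s k < t k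

lemma omegaPow_eq_of_lt {w : List A} {i : ℕ} (h : i < w.length) :
    omegaPow w i = w.getD i default := by
  simp [omegaPow, Nat.mod_eq_of_lt h]

lemma getD_append_left {w x : List A} {i : ℕ} (h : i < w.length) :
    (w ++ x).getD i default = w.getD i default := by
  rw [List.getD_eq_getElem?_getD, List.getD_eq_getElem?_getD,
    List.getElem?_append_left h]

/-- If `u^ω < v^ω` and neither of `u, v` is a prefix of the other, then
`(ux)^ω < (vy)^ω` for all finite words `x, y`. -/
theorem omegaPow_append_lt_of_not_prefix (u v : List A) (hu : u ≠ []) (hv : v ≠ [])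
    (hlt : lexLt (omegaPow u) (omegaPow v))
    (huv : ¬ u <+: v) (hvu : ¬ v <+: u) :
    ∀ x y : List A, lexLt (omegaPow (u ++ x)) (omegaPow (v ++ y)) := by
  -- there is a position below min where u and v differ
  have hex : ∃ n, n < min u.length v.length ∧ u.getD n default ≠ v.getD n default := by
    by_contra hc
    push_neg at hc
    rcases le_total u.length v.length with hle | hle
    · apply huv
      have : u = v.take u.length := by
        apply List.ext_getElem
        · simp [hle]
        · intro i h1 h2
          have hi : i < min u.length v.length := by omega
          have := hc i hi
          simp only [List.getD_eq_getElem?_getD, List.getElem?_eq_getElem h1,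
            List.getElem?_eq_getElem (show i < v.length by omega)] at this
          simpa using this
      rw [this]
      exact List.take_prefix _ _
    · apply hvu
      have : v = u.take v.length := by
        apply List.ext_getElem
        · simp [hle]
        · intro i h1 h2
          have hi : i < min u.length v.length := by omega
          have := (hc i hi).symm
          simp only [List.getD_eq_getElem?_getD, List.getElem?_eq_getElem h1,
            List.getElem?_eq_getElem (show i < u.length by omega)] at this
          simpa using this
      rw [this]
      exact List.take_prefix _ _
  classical
  -- minimal differing position
  set P : ℕ → Prop := fun n => u.getD n default ≠ v.getD n default with hP
  have hexP : ∃ n, P n := ⟨hex.choose, hex.choose_spec.2⟩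
  set k := Nat.find hexP with hk
  have hkmin : k < min u.length v.length :=
    lt_of_le_of_lt (Nat.find_min' hexP hex.choose_spec.2) hex.choose_spec.1
  have hku : k < u.length := lt_of_lt_of_le hkmin (min_le_left _ _)
  have hkv : k < v.length := lt_of_lt_of_le hkmin (min_le_right _ _)
  have hagree : ∀ i < k, u.getD i default = v.getD i default := by
    intro i hi
    have := Nat.find_min hexP hi
    simpa [hP] using not_not.mp this
  -- the lexLt witness must be k
  obtain ⟨m, hmagree, hm⟩ := hlt
  have hmk : m = k := by
    rcases lt_trichotomy m k with h | h | h
    · exfalso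
      have hmu : m < u.length := by omega
      have hmv : m < v.length := by omega
      rw [omegaPow_eq_of_lt hmu, omegaPow_eq_of_lt hmv] at hm
      exact absurd (hagree m h) (ne_of_lt hm)
    · exact h
    · exfalso
      have := hmagree k h
      rw [omegaPow_eq_of_lt hku, omegaPow_eq_of_lt hkv] at this
      exact Nat.find_spec hexP this
  subst hmk
  rw [omegaPow_eq_of_lt hku, omegaPow_eq_of_lt hkv] at hm
  intro x y
  refine ⟨k, ?_, ?_⟩
  · intro i hi
    have hiu : i < u.length := by omega
    have hiv : i < v.length := by omega
    rw [omegaPow_eq_of_lt (by simp; omega), omegaPow_eq_of_lt (by simp; omega),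
      getD_append_left hiu, getD_append_left hiv]
    exact hagree i hi
  · rw [omegaPow_eq_of_lt (by simp; omega), omegaPow_eq_of_lt (by simp; omega),
      getD_append_left hku, getD_append_left hkv]
    exact hm
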